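/- Let k ≥ 1 and let m, t be positive integers with m = t(k²−k+1). Consider real variables λ₁,…,λₘ satisfying 0 ≤ λᵢ ≤ k for all i, ∑λᵢ² = mk, and ∑λᵢ⁴ ≥ mk(2k−1). Then ∑λᵢ ≤ tk + t(k²−k)√(k−1), with equality if and only if exactly t of the λᵢ equal k and the remaining t(k²−k) of them equal √(k−1). -/

import Mathlib

/-! With `s = √(k - 1)`, the quartic `(x - s)² (k - x) (x + k + 2s)` is nonnegative on `[0, k]`
and vanishes there only at `s` and `k`. Its `x³`-coefficient is zero, so once `∑ λᵢ² = mk` is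
used, its sum over the `λᵢ` equals `2s(k + s)² (B - ∑ λᵢ)`, with `B` the claimed bound, minus the
slack `∑ λᵢ⁴ - mk(2k - 1)`. Hence `∑ λᵢ ≤ B`, with equality only if every `λᵢ` is `s` or `k`, and
then the second moment fixes how many equal `k`. For `k = 1` the factor `2s(k + s)²` vanishes, but
there `∑ λᵢ² = m` and `λᵢ ≤ 1` already force every `λᵢ = 1`. -/

set_option linter.unusedSectionVars false
open Finset

section Defs
variable {V : Type*} [Fintype V] [DecidableEq V]

theorem adjMatrix_isHermitian (G : SimpleGraph V) [DecidableRel G.Adj] :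
    (SimpleGraph.adjMatrix ℝ G).IsHermitian := by
  ext i j
  simp [Matrix.conjTranspose_apply, SimpleGraph.adjMatrix_apply, SimpleGraph.adj_comm]

/-- The eigenvalues of the adjacency matrix of a graph. -/
noncomputable def adjEigs (G : SimpleGraph V) : V → ℝ := by
  classical exact (adjMatrix_isHermitian G).eigenvalues

/-- The spectrum of the graph, as a multiset of real eigenvalues. -/
noncomputable def adjSpectrum (G : SimpleGraph V) : Multiset ℝ :=
  Finset.univ.val.map (adjEigs G)

/-- The energy per vertex of a graph. -/
noncomputable def epv (G : SimpleGraph V) : ℝ :=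
  (∑ i, |adjEigs G i|) / (Fintype.card V)

/-- The disjoint union of an indexed family of graphs. -/
def sigmaGraph {ι : Type*} {W : ι → Type*} (G : ∀ i, SimpleGraph (W i)) :
    SimpleGraph (Σ i, W i) where
  Adj x y := ∃ (i : ι) (a b : W i), (G i).Adj a b ∧ x = ⟨i, a⟩ ∧ y = ⟨i, b⟩
  symm := by refine ⟨?_⟩; rintro x y ⟨i, a, b, h, rfl, rfl⟩; exact ⟨i, b, a, h.symm, rfl, rfl⟩
  loopless := by
    refine ⟨?_⟩
    rintro x ⟨i, a, b, h, rfl, h2⟩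
    simp only [Sigma.mk.inj_iff, heq_eq_eq, true_and] at h2
    exact h.ne h2

/-- The bipartite incidence graph of a point-line geometry. -/
def incidenceGraph (P L : Type*) [Membership P L] : SimpleGraph (P ⊕ L) where
  Adj x y := (∃ p l, p ∈ l ∧ x = Sum.inl p ∧ y = Sum.inr l) ∨
             (∃ p l, p ∈ l ∧ x = Sum.inr l ∧ y = Sum.inl p)
  symm := by
    refine ⟨?_⟩
    rintro x y (⟨p, l, h, rfl, rfl⟩ | ⟨p, l, h, rfl, rfl⟩)
    · exact Or.inr ⟨p, l, h, rfl, rfl⟩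
    · exact Or.inl ⟨p, l, h, rfl, rfl⟩
  loopless := by refine ⟨?_⟩; rintro x (⟨p, l, h, rfl, h2⟩ | ⟨p, l, h, rfl, h2⟩) <;> simp at h2

/-- The bipartite double of a graph. -/
def bipartiteDouble (G : SimpleGraph V) : SimpleGraph (V ⊕ V) where
  Adj x y := (∃ u v, G.Adj u v ∧ x = Sum.inl u ∧ y = Sum.inr v) ∨
             (∃ u v, G.Adj u v ∧ x = Sum.inr u ∧ y = Sum.inl v)
  symm := by
    refine ⟨?_⟩
    rintro x y (⟨u, v, h, rfl, rfl⟩ | ⟨u, v, h, rfl, rfl⟩)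
    · exact Or.inr ⟨v, u, h.symm, rfl, rfl⟩
    · exact Or.inl ⟨v, u, h.symm, rfl, rfl⟩
  loopless := by refine ⟨?_⟩; rintro x (⟨u, v, h, rfl, h2⟩ | ⟨u, v, h, rfl, h2⟩) <;> simp at h2

section MomentBound

variable {ι : Type*} [Fintype ι] {x : ι → ℝ} {k s t : ℝ}

def quarticGap (k s x : ℝ) : ℝ := (x - s) ^ 2 * (k - x) * (x + k + 2 * s)

theorem quarticGap_eq (k s x : ℝ) :
    quarticGap k s x = -x ^ 4 + (k ^ 2 + 2 * s * k + 3 * s ^ 2) * x ^ 2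
      - 2 * s * (k + s) ^ 2 * x + s ^ 2 * k * (k + 2 * s) := by
  unfold quarticGap; ring

theorem quarticGap_nonneg {y : ℝ} (hs : 0 ≤ s) (hy : 0 ≤ y) (hyk : y ≤ k) :
    0 ≤ quarticGap k s y := by
  have : 0 ≤ k - y := by linarith
  have : 0 ≤ y + k + 2 * s := by linarith
  unfold quarticGap
  positivity

theorem quarticGap_eq_zero_iff {y : ℝ} (hk : 0 < k) (hs : 0 ≤ s) (hy : 0 ≤ y) :
    quarticGap k s y = 0 ↔ y = k ∨ y = s := by
  have : y + k + 2 * s ≠ 0 := by positivity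
  simp [quarticGap, this, sub_eq_zero, eq_comm (a := k), or_comm]

theorem sum_quarticGap (k s : ℝ) (x : ι → ℝ) :
    ∑ i, quarticGap k s (x i) = -∑ i, x i ^ 4 + (k ^ 2 + 2 * s * k + 3 * s ^ 2) * ∑ i, x i ^ 2
      - 2 * s * (k + s) ^ 2 * ∑ i, x i + Fintype.card ι * (s ^ 2 * k * (k + 2 * s)) := by
  simp only [quarticGap_eq, sum_add_distrib, sum_sub_distrib, sum_neg_distrib, ← mul_sum,
    sum_const, card_univ, nsmul_eq_mul]
  ring

theorem mul_sub_sum_eq_sum_quarticGap (hk : 1 ≤ k)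
    (hcard : (Fintype.card ι : ℝ) = t * (k ^ 2 - k + 1))
    (hsq : ∑ i, x i ^ 2 = Fintype.card ι * k) :
    2 * √(k - 1) * (k + √(k - 1)) ^ 2 * (t * k + t * (k ^ 2 - k) * √(k - 1) - ∑ i, x i) =
      ∑ i, quarticGap k √(k - 1) (x i) + (∑ i, x i ^ 4 - Fintype.card ι * k * (2 * k - 1)) := by
  have hs : √(k - 1) ^ 2 = k - 1 := Real.sq_sqrt (by linarith)
  rw [sum_quarticGap, hsq, hcard]
  generalize √(k - 1) = s at hs ⊢
  obtain rfl : k = s ^ 2 + 1 := by linarith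
  ring

theorem eq_of_sum_sq_eq_card_mul_sq {c : ℝ} (hx0 : ∀ i, 0 ≤ x i) (hxc : ∀ i, x i ≤ c)
    (h : ∑ i, x i ^ 2 = Fintype.card ι * c ^ 2) (i : ι) : x i = c := by
  have hsq : ∀ j ∈ univ, x j ^ 2 = c ^ 2 :=
    (sum_eq_sum_iff_of_le fun j _ => pow_le_pow_left₀ (hx0 j) (hxc j) 2).mp (by simpa using h)
  exact (pow_left_inj₀ (hx0 i) ((hx0 i).trans (hxc i)) two_ne_zero).mp (hsq i (mem_univ i))

theorem sum_le_of_moments (hk : 1 ≤ k) (hx0 : ∀ i, 0 ≤ x i) (hxk : ∀ i, x i ≤ k)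
    (hcard : (Fintype.card ι : ℝ) = t * (k ^ 2 - k + 1))
    (hsq : ∑ i, x i ^ 2 = Fintype.card ι * k)
    (hquart : Fintype.card ι * k * (2 * k - 1) ≤ ∑ i, x i ^ 4) :
    ∑ i, x i ≤ t * k + t * (k ^ 2 - k) * √(k - 1) := by
  rcases hk.eq_or_lt with rfl | hk
  · have hone := eq_of_sum_sq_eq_card_mul_sq hx0 hxk (by simpa using hsq)
    simp [hone, hcard]
  · have hpos : 0 < 2 * √(k - 1) * (k + √(k - 1)) ^ 2 := by
      have := Real.sqrt_pos.2 (sub_pos.2 hk)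
      positivity
    have hgap := sum_nonneg fun i (_ : i ∈ univ) =>
      quarticGap_nonneg (Real.sqrt_nonneg (k - 1)) (hx0 i) (hxk i)
    have hidentity := mul_sub_sum_eq_sum_quarticGap hk.le hcard hsq
    nlinarith

theorem eq_or_eq_of_sum_eq_of_moments (hk : 1 ≤ k) (hx0 : ∀ i, 0 ≤ x i) (hxk : ∀ i, x i ≤ k)
    (hcard : (Fintype.card ι : ℝ) = t * (k ^ 2 - k + 1))
    (hsq : ∑ i, x i ^ 2 = Fintype.card ι * k)
    (hquart : Fintype.card ι * k * (2 * k - 1) ≤ ∑ i, x i ^ 4)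
    (h : ∑ i, x i = t * k + t * (k ^ 2 - k) * √(k - 1)) (i : ι) :
    x i = k ∨ x i = √(k - 1) := by
  rcases hk.eq_or_lt with rfl | hk
  · exact .inl (eq_of_sum_sq_eq_card_mul_sq hx0 hxk (by simpa using hsq) i)
  have hgap_nonneg : ∀ j ∈ univ, 0 ≤ quarticGap k √(k - 1) (x j) := fun j _ =>
    quarticGap_nonneg (Real.sqrt_nonneg (k - 1)) (hx0 j) (hxk j)
  have hgap : ∑ j, quarticGap k √(k - 1) (x j) = 0 := by
    have hidentity := mul_sub_sum_eq_sum_quarticGap hk.le hcard hsq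
    rw [h, sub_self, mul_zero] at hidentity
    linarith [sum_nonneg hgap_nonneg]
  exact (quarticGap_eq_zero_iff (by linarith) (Real.sqrt_nonneg _) (hx0 i)).mp
    ((sum_eq_zero_iff_of_nonneg hgap_nonneg).mp hgap i (mem_univ i))

theorem sum_comp_eq_of_forall_eq_or_eq {a b : ℝ}
    (f : ℝ → ℝ) (h : ∀ i, x i = a ∨ x i = b) :
    ∑ i, f (x i) = Fintype.card ι * f b + (univ.filter fun i => x i = a).card * (f a - f b) := by
  have hf : ∀ i, f (x i) = f b + if x i = a then f a - f b else 0 := fun i => by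
    rcases h i with hi | hi <;> by_cases ha : x i = a <;> simp_all
  simp only [hf, sum_add_distrib, sum_ite, sum_const_zero, sum_const, card_univ, nsmul_eq_mul,
    add_zero]

end MomentBound

theorem optimization_bound_and_equality_general (k t m : ℕ) (hk : 1 ≤ k)
    (hm : m = t * (k ^ 2 - k + 1)) (lam : Fin m → ℝ)
    (hnonneg : ∀ i, 0 ≤ lam i) (hle : ∀ i, lam i ≤ k)
    (hsq : ∑ i, (lam i) ^ 2 = (m : ℝ) * k)
    (hquart : ∑ i, (lam i) ^ 4 ≥ (m : ℝ) * k * (2 * (k : ℝ) - 1)) :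
    (∑ i, lam i ≤ (t : ℝ) * k + (t : ℝ) * ((k : ℝ) ^ 2 - k) * Real.sqrt ((k : ℝ) - 1)) ∧
    ((∑ i, lam i = (t : ℝ) * k + (t : ℝ) * ((k : ℝ) ^ 2 - k) * Real.sqrt ((k : ℝ) - 1)) ↔
      ((Finset.univ.filter fun i => lam i = (k : ℝ)).card = t ∧
        ∀ i, lam i = (k : ℝ) ∨ lam i = Real.sqrt ((k : ℝ) - 1))) := by
  have hK : (1 : ℝ) ≤ k := by exact_mod_cast hk
  have hcard : (Fintype.card (Fin m) : ℝ) = t * ((k : ℝ) ^ 2 - k + 1) := by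
    rw [Fintype.card_fin, hm]
    push_cast [Nat.cast_sub (Nat.le_self_pow two_ne_zero k)]
    ring
  replace hsq : ∑ i, lam i ^ 2 = Fintype.card (Fin m) * (k : ℝ) := by rwa [Fintype.card_fin]
  replace hquart : Fintype.card (Fin m) * (k : ℝ) * (2 * k - 1) ≤ ∑ i, lam i ^ 4 := by
    rwa [Fintype.card_fin]
  refine ⟨sum_le_of_moments hK hnonneg hle hcard hsq hquart, fun h => ?_, fun ⟨hF, hdich⟩ => ?_⟩
  · have hdich := eq_or_eq_of_sum_eq_of_moments hK hnonneg hle hcard hsq hquart h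
    refine ⟨?_, hdich⟩
    have hcount := sum_comp_eq_of_forall_eq_or_eq (· ^ 2) hdich
    rw [hsq, Real.sq_sqrt (by linarith), hcard] at hcount
    have hpos : (0 : ℝ) < (k : ℝ) ^ 2 - k + 1 := by nlinarith
    have hF : ((univ.filter fun i => lam i = (k : ℝ)).card : ℝ) = t :=
      mul_right_cancel₀ hpos.ne' (by linear_combination -hcount)
    exact_mod_cast hF
  · have hcount := sum_comp_eq_of_forall_eq_or_eq id hdich
    simp only [id, hcard, hF] at hcount
    rw [hcount]
    ring

/-- solution of the constrained optimization problem, with equality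
characterization. -/
theorem optimization_bound_and_equality (k t m : ℕ) (hk : 1 ≤ k) (ht : 1 ≤ t)
    (hm : m = t * (k ^ 2 - k + 1)) (lam : Fin m → ℝ)
    (hnonneg : ∀ i, 0 ≤ lam i) (hle : ∀ i, lam i ≤ k)
    (hsq : ∑ i, (lam i) ^ 2 = (m : ℝ) * k)
    (hquart : ∑ i, (lam i) ^ 4 ≥ (m : ℝ) * k * (2 * (k : ℝ) - 1)) :
    (∑ i, lam i ≤ (t : ℝ) * k + (t : ℝ) * ((k : ℝ) ^ 2 - k) * Real.sqrt ((k : ℝ) - 1)) ∧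
    ((∑ i, lam i = (t : ℝ) * k + (t : ℝ) * ((k : ℝ) ^ 2 - k) * Real.sqrt ((k : ℝ) - 1)) ↔
      ((Finset.univ.filter fun i => lam i = (k : ℝ)).card = t ∧
        ∀ i, lam i = (k : ℝ) ∨ lam i = Real.sqrt ((k : ℝ) - 1))) :=
  optimization_bound_and_equality_general k t m hk hm lam hnonneg hle hsq hquart
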